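/- arXiv:1304.3836 — 6 statements merged into one kernel-verified Lean document; each statement's English description precedes it below -/
import Mathlib

section
/- The abelian Lie subalgebra H_n = ⊕_{i=1}^n K·(x_i ∂_i) of D_n = Der_K(P_n) equals its own centralizer in D_n; in particular H_n is a maximal abelian Lie subalgebra of D_n. -/
/-!
The Euler operator `x_i ∂_i` multiplies the monomial `x^m` by `m_i`, so in characteristic zero
the simultaneous eigenvectors of `H_n` of weight `w` are exactly the multiples of `x^w`. A
derivation `d` commuting with `H_n` preserves weights, hence `d x_j = c_j x_j` for some scalars
`c_j`, and since a derivation is determined by its values on the variables,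
`d = ∑ c_j x_j ∂_j ∈ H_n`.
-/

open MvPolynomial

theorem LieAlgebra.lie_eq_zero_of_mem_span {R L : Type*} [CommRing R] [LieRing L]
    [LieAlgebra R L] {s : Set L} (hs : ∀ x ∈ s, ∀ y ∈ s, ⁅x, y⁆ = 0) {x y : L}
    (hx : x ∈ Submodule.span R s) (hy : y ∈ Submodule.span R s) : ⁅x, y⁆ = 0 := by
  induction hx, hy using Submodule.span_induction₂ with
  | mem_mem x y hx hy => exact hs x hx y hy
  | zero_left => exact zero_lie _
  | zero_right => exact lie_zero _
  | add_left x y z _ _ _ hxz hyz => rw [add_lie, hxz, hyz, add_zero]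
  | add_right x y z _ _ _ hxy hxz => rw [lie_add, hxy, hxz, add_zero]
  | smul_left r x y _ _ h => rw [smul_lie, h, smul_zero]
  | smul_right r x y _ _ h => rw [lie_smul, h, smul_zero]

namespace MvPolynomial

section CommSemiring

variable {σ R : Type*} [CommSemiring R]

theorem coeff_X_mul_pderiv (i : σ) (p : MvPolynomial σ R) (m : σ →₀ ℕ) :
    coeff m (X i * pderiv i p) = m i * coeff m p := by
  classical
  induction p using MvPolynomial.induction_on' with
  | add p q hp hq => simp only [map_add, mul_add, coeff_add, hp, hq]
  | monomial s a =>
    rw [X_mul_pderiv_monomial, coeff_smul, coeff_monomial]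
    split_ifs with h
    · rw [h, nsmul_eq_mul]
    · simp

variable (R) in
noncomputable def eulerDerivation (i : σ) : Derivation R (MvPolynomial σ R) (MvPolynomial σ R) :=
  (X i : MvPolynomial σ R) • pderiv i

theorem eulerDerivation_apply (i : σ) (p : MvPolynomial σ R) :
    eulerDerivation R i p = X i * pderiv i p := rfl

theorem coeff_eulerDerivation (i : σ) (p : MvPolynomial σ R) (m : σ →₀ ℕ) :
    coeff m (eulerDerivation R i p) = m i * coeff m p :=
  coeff_X_mul_pderiv i p m

theorem eulerDerivation_X (i j : σ) :
    eulerDerivation R i (X j) = ((Finsupp.single j 1 : σ →₀ ℕ) i : R) • X j := by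
  classical
  rcases eq_or_ne j i with rfl | hji
  · simp [eulerDerivation_apply]
  · simp [eulerDerivation_apply, pderiv_X, hji, hji.symm]

theorem eq_monomial_of_eulerDerivation_eq_smul [IsDomain R] [CharZero R]
    {p : MvPolynomial σ R} {w : σ →₀ ℕ} (h : ∀ i, eulerDerivation R i p = (w i : R) • p) :
    p = monomial w (coeff w p) := by
  classical
  ext m
  rw [coeff_monomial]
  split_ifs with hw
  · rw [hw]
  by_contra hm
  refine hw (Finsupp.ext fun i => ?_)
  have hi := congrArg (coeff m) (h i)
  rw [coeff_eulerDerivation, coeff_smul, smul_eq_mul] at hi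
  exact_mod_cast (mul_right_cancel₀ hm hi).symm

end CommSemiring

section CommRing

variable {σ R : Type*} [CommRing R]

theorem lie_eulerDerivation (i j : σ) : ⁅eulerDerivation R i, eulerDerivation R j⁆ = 0 := by
  refine derivation_ext fun k => ?_
  simp only [Derivation.commutator_apply, eulerDerivation_X, Derivation.map_smul, smul_smul,
    mul_comm, sub_self, Derivation.zero_apply]

theorem eulerDerivation_apply_of_lie_eq_zero
    {d : Derivation R (MvPolynomial σ R) (MvPolynomial σ R)} {i : σ}
    (h : ⁅d, eulerDerivation R i⁆ = 0) (j : σ) :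
    eulerDerivation R i (d (X j)) = ((Finsupp.single j 1 : σ →₀ ℕ) i : R) • d (X j) := by
  have hj := congrArg (· (X j)) h
  simp only [Derivation.commutator_apply, eulerDerivation_X, Derivation.map_smul,
    Derivation.zero_apply, sub_eq_zero] at hj
  exact hj.symm

theorem eq_sum_smul_eulerDerivation [Fintype σ] [IsDomain R] [CharZero R]
    {d : Derivation R (MvPolynomial σ R) (MvPolynomial σ R)}
    (hd : ∀ i : σ, ⁅d, eulerDerivation R i⁆ = 0) :
    d = ∑ j, coeff (Finsupp.single j 1) (d (X j)) • eulerDerivation R j := by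
  refine derivation_ext fun k => ?_
  set c : σ → R := fun j => coeff (Finsupp.single j 1) (d (X j))
  have hsum := congrFun (map_sum Derivation.coeFnAddMonoidHom
    (fun j => c j • eulerDerivation R j) Finset.univ) (X k)
  simp only [Derivation.coeFnAddMonoidHom_apply, Finset.sum_apply] at hsum
  rw [hsum, Finset.sum_eq_single_of_mem k (Finset.mem_univ k) fun j _ hjk => ?_]
  · calc d (X k) = monomial (Finsupp.single k 1) (c k) :=
          eq_monomial_of_eulerDerivation_eq_smul fun i =>
            eulerDerivation_apply_of_lie_eq_zero (hd i) k
      _ = (c k • eulerDerivation R k) (X k) := by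
        rw [Derivation.smul_apply, eulerDerivation_X, Finsupp.single_eq_same, Nat.cast_one,
          one_smul, X, smul_monomial, smul_eq_mul, mul_one]
  · simp [eulerDerivation_X, hjk]

end CommRing

end MvPolynomial

/-- The abelian subalgebra H_n = ⊕ K·(x_i ∂_i) of D_n = Der_K(P_n) equals its own
centralizer in D_n; in particular it is a maximal abelian Lie subalgebra. -/
theorem cartan_eq_centralizer (n : ℕ) (K : Type*) [Field K] [CharZero K]
    (Hn : Submodule K (Derivation K (MvPolynomial (Fin n) K) (MvPolynomial (Fin n) K)))
    (hHn : Hn = Submodule.span K {d | ∃ i : Fin n, d = (X i : MvPolynomial (Fin n) K) • pderiv i}) :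
    {d : Derivation K (MvPolynomial (Fin n) K) (MvPolynomial (Fin n) K) |
        ∀ h ∈ Hn, ⁅d, h⁆ = 0} = (Hn : Set _) ∧
    ∀ A : Submodule K (Derivation K (MvPolynomial (Fin n) K) (MvPolynomial (Fin n) K)),
      Hn ≤ A → (∀ x ∈ A, ∀ y ∈ A, ⁅x, y⁆ = 0) → A = Hn := by
  have euler_mem (i : Fin n) : eulerDerivation K i ∈ Hn := hHn ▸ Submodule.subset_span ⟨i, rfl⟩
  have abelian : ∀ x ∈ Hn, ∀ y ∈ Hn, ⁅x, y⁆ = 0 := by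
    subst hHn
    intro x hx y hy
    refine LieAlgebra.lie_eq_zero_of_mem_span ?_ hx hy
    rintro _ ⟨i, rfl⟩ _ ⟨j, rfl⟩
    exact lie_eulerDerivation i j
  have mem_of_commute (d) (hd : ∀ h ∈ Hn, ⁅d, h⁆ = 0) : d ∈ Hn := by
    rw [eq_sum_smul_eulerDerivation fun i => hd _ (euler_mem i)]
    exact Submodule.sum_mem _ fun j _ => Submodule.smul_mem _ _ (euler_mem j)
  refine ⟨Set.ext fun d => ⟨mem_of_commute d, fun hd h hh => abelian d hd h hh⟩, ?_⟩
  intro A hle hA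
  exact le_antisymm (fun d hd => mem_of_commute d fun h hh => hA d hd h (hle hh)) hle
end

section
/- The quotient P_n/K of the polynomial algebra by the constants is a simple module over the Lie algebra D_n = Der_K(P_n) (acting by derivations), and its endomorphism ring End_{D_n}(P_n/K) consists exactly of the scalar multiples of the identity. -/
open MvPolynomial

/-- The action of a derivation δ of P_n on the quotient module P_n/K
(K = the constants = K-span of 1). -/
noncomputable def derivationQuotientAction (n : ℕ) (K : Type*) [Field K] [CharZero K]
    (δ : Derivation K (MvPolynomial (Fin n) K) (MvPolynomial (Fin n) K)) :
    (MvPolynomial (Fin n) K ⧸ (Submodule.span K {(1 : MvPolynomial (Fin n) K)})) →ₗ[K]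
    (MvPolynomial (Fin n) K ⧸ (Submodule.span K {(1 : MvPolynomial (Fin n) K)})) :=
  Submodule.mapQ _ _ δ.toLinearMap (by
    rw [Submodule.span_le]
    rintro x hx
    simp only [Set.mem_singleton_iff] at hx
    subst hx
    simp [Submodule.mem_comap])

/-!
Let `N` be a submodule of `P/K` stable under all derivations, and let `I` be the ideal of
polynomials `h` with `r * h ∈ N` (mod `K`) for every `r`. Since `r * δ m = (r • δ) m`, every
`δ m` with `m ∈ N` lies in `I`; hence `I` is stable under the partial derivatives, and `I ≠ 0`
when `N ≠ 0` because a nonconstant polynomial has a nonzero partial derivative. In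
characteristic zero a nonzero element of `I` of minimal degree has all partial derivatives zero,
so it is a nonzero constant, `I = P` and `N = P/K`.

For an endomorphism `f` commuting with the action, write `f (x₁) = g` mod `K`. Applying
`q • ∂₁` to `x₁` gives `f q = q * ∂₁ g`, and `q = 1` (which is `0` in `P/K`) forces `∂₁ g ∈ K`.
-/

namespace Derivation

variable {R A : Type*} [CommRing R] [CommRing A] [Algebra R A]

theorem span_one_le_comap (δ : Derivation R A A) :
    Submodule.span R {(1 : A)} ≤ (Submodule.span R {(1 : A)}).comap δ.toLinearMap := by
  rw [Submodule.span_le, Set.singleton_subset_iff, SetLike.mem_coe, Submodule.mem_comap,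
    coeFn_coe, map_one_eq_zero]
  exact zero_mem _

def quotientSpanOneMap (δ : Derivation R A A) :
    (A ⧸ Submodule.span R {(1 : A)}) →ₗ[R] A ⧸ Submodule.span R {(1 : A)} :=
  Submodule.mapQ _ _ δ.toLinearMap δ.span_one_le_comap

@[simp]
theorem quotientSpanOneMap_mk (δ : Derivation R A A) (a : A) :
    δ.quotientSpanOneMap (Submodule.Quotient.mk a) = Submodule.Quotient.mk (δ a) :=
  rfl

theorem exists_eq_smul_id_of_commute {a : A} {D : Derivation R A A} (hD : D a = 1)
    (f : (A ⧸ Submodule.span R {(1 : A)}) →ₗ[R] A ⧸ Submodule.span R {(1 : A)})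
    (hf : ∀ (δ : Derivation R A A) x, f (δ.quotientSpanOneMap x) = δ.quotientSpanOneMap (f x)) :
    ∃ c : R, f = c • LinearMap.id := by
  obtain ⟨g, hg⟩ := Submodule.Quotient.mk_surjective _ (f (Submodule.Quotient.mk a))
  have hf_mk (q : A) : f (Submodule.Quotient.mk q) = Submodule.Quotient.mk (q * D g) := by
    have := hf (q • D) (Submodule.Quotient.mk a)
    rwa [quotientSpanOneMap_mk, smul_apply, hD, smul_eq_mul, mul_one, ← hg,
      quotientSpanOneMap_mk, smul_apply, smul_eq_mul] at this
  have hDg : D g ∈ Submodule.span R {(1 : A)} := by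
    have hone : (Submodule.Quotient.mk 1 : A ⧸ Submodule.span R {(1 : A)}) = 0 :=
      (Submodule.Quotient.mk_eq_zero _).mpr (Submodule.mem_span_singleton_self 1)
    rw [← Submodule.Quotient.mk_eq_zero, ← one_mul (D g), ← hf_mk, hone, map_zero]
  obtain ⟨c, hc⟩ := Submodule.mem_span_singleton.mp hDg
  refine ⟨c, Submodule.linearMap_qext _ (LinearMap.ext fun q => ?_)⟩
  simp [hf_mk, ← hc, Submodule.Quotient.mk_smul]

end Derivation

namespace Submodule

variable {R A : Type*} [CommRing R] [CommRing A] [Algebra R A]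

/-- The largest ideal of `A` contained in the `R`-submodule `M`. -/
def idealCore (M : Submodule R A) : Ideal A where
  carrier := {h | ∀ r, r * h ∈ M}
  zero_mem' r := by simp
  add_mem' ha hb r := by simpa only [mul_add] using M.add_mem (ha r) (hb r)
  smul_mem' s h hh r := by simpa only [smul_eq_mul, mul_assoc] using hh (r * s)

theorem mem_of_mem_idealCore {M : Submodule R A} {h : A} (hh : h ∈ M.idealCore) : h ∈ M := by
  simpa using hh 1

theorem eq_top_of_idealCore_eq_top {M : Submodule R A} (hM : M.idealCore = ⊤) : M = ⊤ :=
  eq_top_iff.mpr fun a _ => by simpa using (hM ▸ Submodule.mem_top : (1 : A) ∈ M.idealCore) a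

theorem apply_mem_idealCore {M : Submodule R A}
    (hM : ∀ δ : Derivation R A A, ∀ m ∈ M, δ m ∈ M) (δ : Derivation R A A) {m : A}
    (hm : m ∈ M) : δ m ∈ M.idealCore :=
  fun r => hM (r • δ) m hm

end Submodule

namespace MvPolynomial

variable {σ : Type*}

theorem eq_C_of_forall_pderiv_eq_zero {R : Type*} [CommRing R] [IsAddTorsionFree R]
    {p : MvPolynomial σ R} (hp : ∀ i, pderiv i p = 0) : p = C (coeff 0 p) := by
  refine coe_injective σ R (MvPowerSeries.pderiv.ext (fun i => ?_) ?_)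
  · rw [MvPowerSeries.pderiv_coe, MvPowerSeries.pderiv_coe, hp, pderiv_C]
  · rw [← MvPowerSeries.coeff_zero_eq_constantCoeff_apply, coeff_coe, coe_C,
      MvPowerSeries.constantCoeff_C]

theorem totalDegree_pderiv_lt {R : Type*} [CommSemiring R] {p : MvPolynomial σ R} {i : σ}
    (hp : pderiv i p ≠ 0) : (pderiv i p).totalDegree < p.totalDegree := by
  obtain ⟨m, hm, hdeg⟩ := Finset.exists_mem_eq_sup _
    (support_nonempty.mpr hp) fun s => s.sum fun _ e => e
  have hmem : m + Finsupp.single i 1 ∈ p.support := by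
    rw [mem_support_iff, coeff_pderiv] at hm
    exact mem_support_iff.mpr (left_ne_zero_of_mul hm)
  have hle := le_totalDegree hmem
  rw [Finsupp.sum_add_index' (fun _ => rfl) (fun _ _ _ => rfl),
    Finsupp.sum_single_index rfl] at hle
  rw [totalDegree, hdeg]
  omega

variable {K : Type*} [Field K] [CharZero K]

theorem ideal_eq_top_of_pderiv_mem (I : Ideal (MvPolynomial σ K))
    (hI : ∀ i, ∀ p ∈ I, pderiv i p ∈ I) (hne : I ≠ ⊥) : I = ⊤ := by
  obtain ⟨h, hmem, h0⟩ := Submodule.exists_mem_ne_zero_of_ne_bot hne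
  induction hd : h.totalDegree using Nat.strong_induction_on generalizing h with
  | _ d ih =>
  by_cases hconst : ∀ i, pderiv i h = 0
  · have hC := eq_C_of_forall_pderiv_eq_zero hconst
    have hc : coeff 0 h ≠ 0 := fun hc => h0 (by rw [hC, hc, C_0])
    exact I.eq_top_of_isUnit_mem hmem (hC ▸ hc.isUnit.map C)
  · push Not at hconst
    obtain ⟨i, hi⟩ := hconst
    exact ih _ (hd ▸ totalDegree_pderiv_lt hi) _ (hI i h hmem) hi rfl

theorem eq_bot_or_eq_top_of_forall_quotientSpanOneMap_mem
    {N : Submodule K (MvPolynomial σ K ⧸ Submodule.span K {(1 : MvPolynomial σ K)})}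
    (hN : ∀ δ : Derivation K (MvPolynomial σ K) (MvPolynomial σ K),
      ∀ x ∈ N, δ.quotientSpanOneMap x ∈ N) :
    N = ⊥ ∨ N = ⊤ := by
  refine or_iff_not_imp_left.mpr fun hbot => ?_
  set M := N.comap (Submodule.mkQ _)
  have hM : ∀ δ : Derivation K _ _, ∀ m ∈ M, δ m ∈ M := fun δ _ hm => hN δ _ hm
  obtain ⟨x, hx, hx0⟩ := Submodule.exists_mem_ne_zero_of_ne_bot hbot
  obtain ⟨p, rfl⟩ := Submodule.Quotient.mk_surjective _ x
  obtain ⟨i, hi⟩ : ∃ i, pderiv i p ≠ 0 := by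
    by_contra! hconst
    refine hx0 ((Submodule.Quotient.mk_eq_zero _).mpr (Submodule.mem_span_singleton.mpr ?_))
    exact ⟨coeff 0 p, by rw [← C_eq_smul_one, ← eq_C_of_forall_pderiv_eq_zero hconst]⟩
  have hcore : M.idealCore = ⊤ := by
    refine ideal_eq_top_of_pderiv_mem _
      (fun _ q hq => M.apply_mem_idealCore hM _ (M.mem_of_mem_idealCore hq)) ?_
    exact (Submodule.ne_bot_iff _).mpr ⟨_, M.apply_mem_idealCore hM (pderiv i) hx, hi⟩
  have hMtop : M = ⊤ := Submodule.eq_top_of_idealCore_eq_top hcore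
  rw [Submodule.eq_top_iff']
  rintro ⟨q⟩
  exact (hMtop ▸ Submodule.mem_top : q ∈ M)

end MvPolynomial

/-- P_n/K is a simple D_n-module and End_{D_n}(P_n/K) = K·id. -/
theorem quotient_module_simple_and_endomorphisms (n : ℕ) (hn : 0 < n)
    (K : Type*) [Field K] [CharZero K] :
    (∀ N : Submodule K
        (MvPolynomial (Fin n) K ⧸ (Submodule.span K {(1 : MvPolynomial (Fin n) K)})),
      (∀ (δ : Derivation K (MvPolynomial (Fin n) K) (MvPolynomial (Fin n) K)),
        ∀ m ∈ N, derivationQuotientAction n K δ m ∈ N) → N = ⊥ ∨ N = ⊤) ∧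
    (∀ f : (MvPolynomial (Fin n) K ⧸ (Submodule.span K {(1 : MvPolynomial (Fin n) K)})) →ₗ[K]
        (MvPolynomial (Fin n) K ⧸ (Submodule.span K {(1 : MvPolynomial (Fin n) K)})),
      (∀ (δ : Derivation K (MvPolynomial (Fin n) K) (MvPolynomial (Fin n) K)) m,
        f (derivationQuotientAction n K δ m) = derivationQuotientAction n K δ (f m)) →
      ∃ c : K, f = c • LinearMap.id) :=
  ⟨fun _ hN => eq_bot_or_eq_top_of_forall_quotientSpanOneMap_mem hN,
    fun f hf => Derivation.exists_eq_smul_id_of_commute (pderiv_X_self ⟨0, hn⟩) f hf⟩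
end

section
/- If a K-algebra automorphism σ of P_n = K[x_1,...,x_n] satisfies σ ∂_i σ^{-1} = ∂_i and σ (x_i∂_i) σ^{-1} = x_i∂_i for all i, then σ is the identity. Consequently, the group homomorphism Aut_K(P_n) → Aut_Lie(Der_K(P_n)), σ ↦ (δ ↦ σδσ^{-1}), is injective. -/
open MvPolynomial

theorem fixes_X_of_fixes_derivs (n : ℕ) (K : Type*) [Field K] [CharZero K]
    (σ : MvPolynomial (Fin n) K ≃ₐ[K] MvPolynomial (Fin n) K)
    (h1 : ∀ (i : Fin n) (p : MvPolynomial (Fin n) K), σ (pderiv i (σ.symm p)) = pderiv i p)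
    (h2 : ∀ (i : Fin n) (p : MvPolynomial (Fin n) K),
        σ (((X i : MvPolynomial (Fin n) K) • pderiv i) (σ.symm p)) =
          ((X i : MvPolynomial (Fin n) K) • pderiv i) p) :
    σ = AlgEquiv.refl := by
  have hX : ∀ i : Fin n, σ (X i) = X i := by
    intro i
    have hd : (1 : MvPolynomial (Fin n) K) = pderiv i (σ (X i)) := by
      have := h1 i (σ (X i))
      rw [σ.symm_apply_apply] at this
      simpa using this
    have hH := h2 i (σ (X i))
    rw [σ.symm_apply_apply] at hH
    simpa [← hd] using hH
  have h : (σ : MvPolynomial (Fin n) K →ₐ[K] MvPolynomial (Fin n) K) =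
      AlgHom.id K (MvPolynomial (Fin n) K) := algHom_ext fun i => by simp [hX i]
  exact AlgEquiv.ext fun p => AlgHom.congr_fun h p

/-- If a K-algebra automorphism σ of P_n fixes the ∂_i and the H_i = x_i∂_i under
conjugation then σ = id; consequently the homomorphism
Aut_K(P_n) → Aut_Lie(Der_K(P_n)), σ ↦ (δ ↦ σδσ⁻¹), is injective. -/
theorem faithful_action_on_derivations (n : ℕ) (K : Type*) [Field K] [CharZero K] :
    (∀ σ : MvPolynomial (Fin n) K ≃ₐ[K] MvPolynomial (Fin n) K,
      (∀ (i : Fin n) (p : MvPolynomial (Fin n) K), σ (pderiv i (σ.symm p)) = pderiv i p) →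
      (∀ (i : Fin n) (p : MvPolynomial (Fin n) K),
        σ (((X i : MvPolynomial (Fin n) K) • pderiv i) (σ.symm p)) =
          ((X i : MvPolynomial (Fin n) K) • pderiv i) p) →
      σ = AlgEquiv.refl) ∧
    (∀ σ τ : MvPolynomial (Fin n) K ≃ₐ[K] MvPolynomial (Fin n) K,
      (∀ (δ : Derivation K (MvPolynomial (Fin n) K) (MvPolynomial (Fin n) K))
        (p : MvPolynomial (Fin n) K), σ (δ (σ.symm p)) = τ (δ (τ.symm p))) → σ = τ) := by
  constructor
  · exact fun σ h1 h2 => fixes_X_of_fixes_derivs n K σ h1 h2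
  · intro σ τ h
    set ρ : MvPolynomial (Fin n) K ≃ₐ[K] MvPolynomial (Fin n) K := τ.trans σ.symm with hρ
    have key : ∀ (δ : Derivation K (MvPolynomial (Fin n) K) (MvPolynomial (Fin n) K))
        (p : MvPolynomial (Fin n) K), ρ (δ (ρ.symm p)) = δ p := by
      intro δ p
      have hstep : ρ (δ (ρ.symm p)) = σ.symm (τ (δ (τ.symm (σ p)))) := by
        simp [hρ]
      rw [hstep, ← h δ (σ p), σ.symm_apply_apply, σ.symm_apply_apply]
    have hρid : ρ = AlgEquiv.refl :=
      fixes_X_of_fixes_derivs n K ρ (fun i p => key (pderiv i) p)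
        (fun i p => key ((X i : MvPolynomial (Fin n) K) • pderiv i) p)
    refine AlgEquiv.ext fun p => ?_
    have := AlgEquiv.congr_fun hρid p
    simp only [hρ, AlgEquiv.trans_apply, AlgEquiv.coe_refl, id_eq] at this
    have h3 := congrArg σ this
    rw [σ.apply_symm_apply] at h3
    exact h3.symm
end

section
/- The Lie algebra D_n = Der_K(P_n) has trivial center and is perfect: Z(D_n) = 0 and [D_n, D_n] = D_n. -/
/-!
For a central derivation `D`, the bracket `⁅D, X k • ∂ₖ⁆ = X k • ⁅D, ∂ₖ⁆ + D (X k) • ∂ₖ` reduces to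
`D (X k) • ∂ₖ`, whose value at `X k` is `D (X k)`; so `D` kills every variable and vanishes.
Every derivation is `∑ₖ D (X k) • ∂ₖ`, and in characteristic zero each coefficient has an
antiderivative `g` in the variable `k`, whence `D (X k) • ∂ₖ = ⁅∂ₖ, g • ∂ₖ⁆`.
-/

open MvPolynomial

namespace Derivation

theorem sum_apply {R A M ι : Type*} [CommSemiring R] [CommSemiring A] [Algebra R A]
    [AddCommMonoid M] [Module A M] [Module R M] (s : Finset ι) (D : ι → Derivation R A M) (a : A) :
    (∑ i ∈ s, D i) a = ∑ i ∈ s, D i a := by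
  change coeFnAddMonoidHom (∑ i ∈ s, D i) a = _
  rw [map_sum, Finset.sum_apply]
  rfl

variable {R A : Type*} [CommRing R] [CommRing A] [Algebra R A]

theorem lie_smul (D₁ D₂ : Derivation R A A) (a : A) :
    ⁅D₁, a • D₂⁆ = a • ⁅D₁, D₂⁆ + D₁ a • D₂ := by
  ext b
  simp only [commutator_apply, smul_apply, add_apply, smul_eq_mul, leibniz]
  ring

theorem lie_smul_self (D : Derivation R A A) (a : A) : ⁅D, a • D⁆ = D a • D := by
  rw [lie_smul, lie_self, smul_zero, zero_add]

end Derivation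

namespace MvPolynomial

theorem derivation_eq_sum_smul_pderiv {σ R : Type*} [Fintype σ] [CommSemiring R]
    (D : Derivation R (MvPolynomial σ R) (MvPolynomial σ R)) :
    D = ∑ k, D (X k) • pderiv k := by
  classical
  refine derivation_ext fun j => ?_
  simp [Derivation.sum_apply, pderiv_X, Pi.single_apply]

theorem pderiv_surjective {σ K : Type*} [Field K] [CharZero K] (i : σ) :
    Function.Surjective (pderiv i : MvPolynomial σ K → MvPolynomial σ K) := by
  intro f
  induction f using MvPolynomial.induction_on' with
  | monomial s a =>
    have hs : (s i + 1 : K) ≠ 0 := by exact_mod_cast (s i).succ_ne_zero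
    refine ⟨monomial (s + Finsupp.single i 1) (a / (s i + 1)), ?_⟩
    rw [pderiv_monomial, add_tsub_cancel_right]
    simp [hs]
  | add p q hp hq =>
    obtain ⟨g, rfl⟩ := hp
    obtain ⟨h, rfl⟩ := hq
    exact ⟨g + h, map_add _ g h⟩

theorem lieCenter_derivation_eq_bot (σ R : Type*) [CommRing R] :
    LieAlgebra.center R (Derivation R (MvPolynomial σ R) (MvPolynomial σ R)) = ⊥ := by
  refine (LieSubmodule.eq_bot_iff _).mpr fun D hD => ?_
  have hcomm : ∀ E : Derivation R (MvPolynomial σ R) (MvPolynomial σ R), ⁅D, E⁆ = 0 := fun E => by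
    rw [← lie_skew, (LieModule.mem_maxTrivSubmodule R _ _ D).mp hD E, neg_zero]
  refine derivation_ext fun k => ?_
  have h := congrArg (· (X k)) (Derivation.lie_smul D (pderiv k) (X k))
  simpa [hcomm] using h.symm

theorem lie_top_derivation_eq_top (σ K : Type*) [Fintype σ] [Field K] [CharZero K] :
    ⁅(⊤ : LieIdeal K (Derivation K (MvPolynomial σ K) (MvPolynomial σ K))),
      (⊤ : LieIdeal K (Derivation K (MvPolynomial σ K) (MvPolynomial σ K)))⁆ = ⊤ := by
  refine eq_top_iff.mpr fun D _ => ?_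
  rw [derivation_eq_sum_smul_pderiv D]
  refine sum_mem fun k _ => ?_
  obtain ⟨g, hg⟩ := pderiv_surjective k (D (X k))
  rw [← hg, ← Derivation.lie_smul_self]
  exact LieSubmodule.lie_mem_lie (LieSubmodule.mem_top _) (LieSubmodule.mem_top _)

end MvPolynomial

/-- D_n = Der_K(P_n) has trivial center and is perfect: Z(D_n) = 0 and [D_n, D_n] = D_n. -/
theorem derivation_lie_center_and_perfect (n : ℕ) (K : Type*) [Field K] [CharZero K] :
    LieAlgebra.center K (Derivation K (MvPolynomial (Fin n) K) (MvPolynomial (Fin n) K)) = ⊥ ∧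
    ⁅(⊤ : LieIdeal K (Derivation K (MvPolynomial (Fin n) K) (MvPolynomial (Fin n) K))),
      (⊤ : LieIdeal K (Derivation K (MvPolynomial (Fin n) K) (MvPolynomial (Fin n) K)))⁆ = ⊤ :=
  ⟨lieCenter_derivation_eq_bot (Fin n) K, lie_top_derivation_eq_top (Fin n) K⟩
end

section
/- Let σ be a Lie algebra automorphism of D_n = Der_K(P_n) fixing ∂_1, ..., ∂_n and H_1 = x_1∂_1, ..., H_n = x_n∂_n. Then σ is the identity automorphism of D_n. -/
/-! The monomial field `x^α ∂_j` is an eigenvector of every `ad H_i`, of weight `α - e_j`, and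
`⁅∂_i, x^α ∂_j⁆ = α_i x^(α - e_i) ∂_j`. By well-founded induction on `α`, the difference
`e = σ (x^α ∂_j) - x^α ∂_j` therefore commutes with every `∂_i` and has weight `α - e_j`. Commuting
with all `∂_i` forces the coefficients `e (x_k)` to be constants, and the constant field `∂_k` has
weight `-e_k`; in characteristic zero `α - e_j = -e_k` only for `α = 0`, so `e = 0`. Every
derivation is `∑ₖ d(x_k) ∂_k`, so `σ` fixes everything. -/

open MvPolynomial

namespace Derivation

variable {R A : Type*} [CommRing R] [CommRing A] [Algebra R A]

theorem lie_smul_right (D₁ D₂ : Derivation R A A) (a : A) :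
    ⁅D₁, a • D₂⁆ = D₁ a • D₂ + a • ⁅D₁, D₂⁆ := by
  ext b
  simp only [commutator_apply, smul_apply, add_apply, leibniz, smul_eq_mul]
  ring

theorem lie_smul_left (D₁ D₂ : Derivation R A A) (a : A) :
    ⁅a • D₁, D₂⁆ = a • ⁅D₁, D₂⁆ - D₂ a • D₁ := by
  rw [← lie_skew, lie_smul_right, ← lie_skew D₁]
  module

end Derivation

theorem LieEquiv.lie_sub_self_of_apply_eq {R L : Type*} [CommRing R] [LieRing L] [LieAlgebra R L]
    (σ : L ≃ₗ⁅R⁆ L) {a : L} (ha : σ a = a) (d : L) : ⁅a, σ d - d⁆ = σ ⁅a, d⁆ - ⁅a, d⁆ := by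
  rw [lie_sub, σ.map_lie, ha]

namespace MvPolynomial

section CommRing

variable {ι R : Type*} [CommRing R]

local notation "Der" => Derivation R (MvPolynomial ι R) (MvPolynomial ι R)

theorem derivation_eq_sum_smul_pderiv_s12 [Fintype ι] (D : Der) : D = ∑ k, D (X k) • pderiv k := by
  classical
  refine derivation_ext fun i => ?_
  rw [← Derivation.coeFnAddMonoidHom_apply (∑ k, _), map_sum, Finset.sum_apply,
    Finset.sum_eq_single i (fun k _ hk => by simp [pderiv_X_of_ne (Ne.symm hk)]) (by simp)]
  simp

theorem lie_pderiv_pderiv (i j : ι) : ⁅(pderiv i : Der), (pderiv j : Der)⁆ = 0 := by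
  classical
  refine derivation_ext fun k => ?_
  rw [Derivation.commutator_apply, pderiv_X, pderiv_X, Pi.single_apply, Pi.single_apply]
  split_ifs <;> simp

theorem lie_pderiv_smul_pderiv (p : MvPolynomial ι R) (i j : ι) :
    ⁅(pderiv i : Der), (p • pderiv j : Der)⁆ = pderiv i p • pderiv j := by
  rw [Derivation.lie_smul_right, lie_pderiv_pderiv, smul_zero, add_zero]

theorem lie_pderiv_monomial_smul_pderiv (α : ι →₀ ℕ) (i j : ι) :
    ⁅(pderiv i : Der), (monomial α (1 : R) • pderiv j : Der)⁆ =
      (α i : R) • (monomial (α - Finsupp.single i 1) (1 : R) • pderiv j : Der) := by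
  rw [lie_pderiv_smul_pderiv, pderiv_monomial, ← smul_assoc, smul_monomial, one_mul, smul_eq_mul,
    mul_one]

theorem lie_X_smul_pderiv_monomial_smul_pderiv [DecidableEq ι] (α : ι →₀ ℕ) (i j : ι) :
    ⁅((X i : MvPolynomial ι R) • pderiv i : Der), (monomial α (1 : R) • pderiv j : Der)⁆ =
      (((↑) ∘ α - Pi.single j 1 : ι → R) i) • (monomial α (1 : R) • pderiv j : Der) := by
  rw [Derivation.lie_smul_left, lie_pderiv_smul_pderiv, smul_smul, X_mul_pderiv_monomial,
    Derivation.smul_apply, pderiv_X, Pi.sub_apply, Function.comp_apply]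
  rcases eq_or_ne i j with rfl | hij
  · simp only [Pi.single_eq_same, smul_eq_mul, mul_one]
    module
  · simp only [nsmul_eq_mul, Pi.single_eq_of_ne hij, smul_eq_mul, mul_zero, zero_smul, sub_zero]
    module

end CommRing

section Field

variable {ι K : Type*} [Field K]

local notation "Der" => Derivation K (MvPolynomial ι K) (MvPolynomial ι K)

theorem eq_zero_of_lie_pderiv_eq_zero_of_weight_ne [DecidableEq ι] {e : Der} (c : ι → K)
    (hc : ∀ k, c ≠ -Pi.single k 1) (hpd : ∀ i, ⁅(pderiv i : Der), e⁆ = 0)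
    (hH : ∀ i, ⁅((X i : MvPolynomial ι K) • pderiv i : Der), e⁆ = c i • e) : e = 0 := by
  refine derivation_ext fun k => ?_
  have hconst (i : ι) : pderiv i (e (X k)) = 0 := by
    have := congr($(hpd i) (X k))
    rcases eq_or_ne i k with rfl | hik
    · simpa [Derivation.commutator_apply] using this
    · simpa [Derivation.commutator_apply, pderiv_X_of_ne hik.symm] using this
  have hweight (i : ι) : (c + Pi.single k 1 : ι → K) i • e (X k) = 0 := by
    have := congr($(hH i) (X k))
    rcases eq_or_ne i k with rfl | hik
    · simp only [Derivation.commutator_apply, Derivation.smul_apply, hconst, smul_eq_mul,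
        mul_zero, pderiv_X_self, mul_one, zero_sub] at this
      rw [Pi.add_apply, Pi.single_eq_same, add_smul, one_smul, ← this, neg_add_cancel]
    · simp only [Derivation.commutator_apply, Derivation.smul_apply, hconst, smul_eq_mul,
        mul_zero, pderiv_X_of_ne hik.symm, map_zero, sub_self] at this
      simpa [Pi.single_eq_of_ne hik] using this.symm
  by_contra hne
  refine hc k (eq_neg_of_add_eq_zero_left ?_)
  ext i
  exact (smul_eq_zero.mp (hweight i)).resolve_right hne

theorem monomial_weight_ne [DecidableEq ι] [CharZero K] {α : ι →₀ ℕ} (hα : α ≠ 0) (j k : ι) :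
    ((↑) ∘ α - Pi.single j 1 : ι → K) ≠ -Pi.single k 1 := by
  intro h
  have hjk : j = k := by
    by_contra hjk
    have hk : (α k : K) = -1 := by simpa [Pi.single_eq_of_ne' hjk] using congrFun h k
    have : ((α k + 1 : ℕ) : K) = 0 := by push_cast; rw [hk, neg_add_cancel]
    exact Nat.succ_ne_zero _ (Nat.cast_eq_zero.mp this)
  subst hjk
  refine hα (Finsupp.ext fun i => ?_)
  rcases eq_or_ne i j with rfl | hij
  · simpa using congrFun h i
  · simpa [Pi.single_eq_of_ne hij] using congrFun h i

variable [CharZero K]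

theorem apply_monomial_smul_pderiv_eq_self [DecidableEq ι] (σ : Der ≃ₗ⁅K⁆ Der)
    (h_pderiv : ∀ i, σ (pderiv i) = pderiv i)
    (h_euler : ∀ i, σ ((X i : MvPolynomial ι K) • pderiv i) = (X i : MvPolynomial ι K) • pderiv i)
    (α : ι →₀ ℕ) (j : ι) : σ (monomial α (1 : K) • pderiv j) = monomial α (1 : K) • pderiv j := by
  induction α using WellFoundedLT.induction generalizing j with
  | _ α ih =>
  rcases eq_or_ne α 0 with rfl | hα
  · simpa using h_pderiv j
  rw [← sub_eq_zero]
  refine eq_zero_of_lie_pderiv_eq_zero_of_weight_ne _ (monomial_weight_ne hα j)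
    (fun i => ?_) (fun i => ?_)
  · rw [σ.lie_sub_self_of_apply_eq (h_pderiv i), lie_pderiv_monomial_smul_pderiv, map_smul,
      sub_eq_zero]
    rcases eq_or_ne (α i) 0 with hi | hi
    · simp [hi]
    · have hlt : α - Finsupp.single i 1 < α :=
        tsub_le_self.lt_of_ne fun h => by
          have := DFunLike.congr_fun h i
          simp only [Finsupp.coe_tsub, Pi.sub_apply, Finsupp.single_eq_same] at this
          omega
      rw [ih _ hlt j]
  · rw [σ.lie_sub_self_of_apply_eq (h_euler i), lie_X_smul_pderiv_monomial_smul_pderiv, map_smul,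
      smul_sub]

theorem apply_smul_pderiv_eq_self (σ : Der ≃ₗ⁅K⁆ Der)
    (h_pderiv : ∀ i, σ (pderiv i) = pderiv i)
    (h_euler : ∀ i, σ ((X i : MvPolynomial ι K) • pderiv i) = (X i : MvPolynomial ι K) • pderiv i)
    (p : MvPolynomial ι K) (j : ι) : σ (p • pderiv j) = p • pderiv j := by
  classical
  induction p using MvPolynomial.induction_on' with
  | monomial α a =>
    rw [← mul_one a, ← smul_eq_mul, ← smul_monomial, smul_assoc, map_smul,
      apply_monomial_smul_pderiv_eq_self σ h_pderiv h_euler]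
  | add p q hp hq => rw [add_smul, map_add, hp, hq]

end Field

end MvPolynomial

/-- A Lie algebra automorphism of D_n = Der_K(P_n) fixing ∂_1,...,∂_n and
H_1 = x_1∂_1,...,H_n = x_n∂_n is the identity. -/
theorem lie_automorphism_fixing_partials_and_eulers (n : ℕ) (K : Type*) [Field K] [CharZero K]
    (σ : Derivation K (MvPolynomial (Fin n) K) (MvPolynomial (Fin n) K) ≃ₗ⁅K⁆
         Derivation K (MvPolynomial (Fin n) K) (MvPolynomial (Fin n) K))
    (h1 : ∀ i : Fin n, σ (pderiv i) = pderiv i)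
    (h2 : ∀ i : Fin n, σ ((X i : MvPolynomial (Fin n) K) • pderiv i) =
      (X i : MvPolynomial (Fin n) K) • pderiv i) :
    ∀ d, σ d = d := by
  intro d
  rw [derivation_eq_sum_smul_pderiv_s12 d, map_sum]
  exact Finset.sum_congr rfl fun k _ => apply_smul_pderiv_eq_self σ h1 h2 _ k
end

section
/- Let ∂_1', ..., ∂_n' be pairwise commuting, locally nilpotent K-derivations of P_n = K[x_1,...,x_n] with ∩_{i=1}^n ker_{P_n}(∂_i') = K. Then there exist polynomials x_1', ..., x_n' ∈ P_n with ∂_i'(x_j') = δ_{ij} (Kronecker delta), the algebra map σ: P_n → P_n defined by x_i ↦ x_i' is a K-algebra automorphism, and ∂_i' = σ ∂_i σ^{-1} for all i. -/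
open MvPolynomial

/-!
Let `F_M` (`Derivation.jointFiltration`) be the polynomials killed by every word of length
`M + 1` in the `∂ᵢ'`. As the `∂ᵢ'` commute and are locally nilpotent, this is an exhaustive
multiplicative filtration; as their joint kernel is `K`, the functionals `p ↦ φ (∂'^α p)`,
`|α| ≤ M`, separate the points of `F_M` for any linear `φ` with `φ 1 ≠ 0`. So for a family of
`m` such derivations `dim F_M` grows at most like `M^m`, while the monomials make it grow like
`M^n`. Hence the `∂ⱼ'`, `j ≠ i`, have a common kernel element `p` with `∂ᵢ' p ≠ 0`; by local
nilpotence it can be taken with `∂ᵢ'² p = 0`, so `∂ᵢ' p ∈ Kˣ`, and rescaling gives slices `xᵢ'`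
with `∂ⱼ'(xᵢ') = δⱼᵢ`. The substitution `σ : xᵢ ↦ xᵢ'` intertwines `∂ᵢ` with `∂ᵢ'`, so its kernel
is a `∂`-stable ideal, which is zero in characteristic zero; and `σ` maps the polynomials of
degree `≤ M` injectively into `F_M`, which has at most their dimension, so `σ` is onto.
-/

theorem Function.apply_eq_zero_of_iterate_eq_zero {M : Type*} [Zero M] {f : M → M} (hf : f 0 = 0)
    {P : M → Prop} (hP : ∀ z, P z → P (f z)) (hf2 : ∀ z, P z → f (f z) = 0 → f z = 0) :
    ∀ (m : ℕ) {z : M}, P z → f^[m] z = 0 → f z = 0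
  | 0, _, _, hz => by rw [iterate_zero_apply] at hz; rw [hz, hf]
  | m + 1, z, hPz, hz => hf2 z hPz <|
      apply_eq_zero_of_iterate_eq_zero hf hP hf2 m (hP z hPz) (by rwa [← iterate_succ_apply])

theorem Nat.exists_mul_add_one_pow_lt (c m : ℕ) : ∃ q, (c * q + 1) ^ m < (q + 1) ^ (m + 1) := by
  refine ⟨(c + 1) ^ m, ?_⟩
  set q := (c + 1) ^ m
  calc (c * q + 1) ^ m ≤ ((c + 1) * (q + 1)) ^ m := Nat.pow_le_pow_left (by nlinarith) m
    _ = q * (q + 1) ^ m := by rw [mul_pow]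
    _ < (q + 1) * (q + 1) ^ m := Nat.mul_lt_mul_of_pos_right (Nat.lt_succ_self q) (by positivity)
    _ = (q + 1) ^ (m + 1) := (_root_.pow_succ' _ _).symm

namespace Module.End

variable {R M κ : Type*} [CommSemiring R] [AddCommMonoid M] [Module R M] [Fintype κ]
  (f : κ → Module.End R M) (hf : ∀ i j, Commute (f i) (f j))

def multiPow (α : κ → ℕ) : Module.End R M :=
  Finset.univ.noncommProd (fun k => f k ^ α k) <|
    Set.pairwise_of_forall _ _ fun i j => (hf i j).pow_pow _ _

theorem multiPow_zero : multiPow f hf 0 = 1 :=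
  Finset.noncommProd_eq_pow_card _ _ _ 1 (fun _ _ => pow_zero _) |>.trans (one_pow _)

theorem multiPow_add (α β : κ → ℕ) :
    multiPow f hf (α + β) = multiPow f hf α * multiPow f hf β := by
  rw [multiPow, multiPow, multiPow, ← Finset.noncommProd_mul_distrib]
  · exact Finset.noncommProd_congr rfl (fun k _ => pow_add _ _ _) _
  · exact Set.pairwise_of_forall _ _ fun i j => (hf i j).pow_pow _ _

theorem multiPow_single [DecidableEq κ] (k : κ) : multiPow f hf (Pi.single k 1) = f k := by
  rw [multiPow, ← Finset.noncommProd_erase_mul _ (Finset.mem_univ k), Pi.single_eq_same, pow_one]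
  convert one_mul (f k)
  refine (Finset.noncommProd_eq_pow_card _ _ _ 1 fun i hi => ?_).trans (one_pow _)
  rw [Pi.single_eq_of_ne (Finset.ne_of_mem_erase hi), pow_zero]

end Module.End

open Finset in
def boundedMultiIndices (κ : Type*) [Fintype κ] [DecidableEq κ] (M : ℕ) : Finset (κ → ℕ) :=
  {α ∈ Fintype.piFinset fun _ => range (M + 1) | ∑ k, α k ≤ M}

section BoundedMultiIndices

variable {κ : Type*} [Fintype κ] [DecidableEq κ] {M : ℕ} {α : κ → ℕ}

theorem mem_boundedMultiIndices : α ∈ boundedMultiIndices κ M ↔ ∑ k, α k ≤ M := by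
  refine Finset.mem_filter.trans ⟨And.right, fun h => ⟨Fintype.mem_piFinset.2 fun k => ?_, h⟩⟩
  exact Finset.mem_range.2 <| Nat.lt_succ_of_le <|
    (Finset.single_le_sum (by simp) (Finset.mem_univ k)).trans h

theorem card_boundedMultiIndices_le :
    (boundedMultiIndices κ M).card ≤ (M + 1) ^ Fintype.card κ :=
  (Finset.card_filter_le _ _).trans (by simp)

end BoundedMultiIndices

namespace Derivation

section Filtration

variable {R A ι : Type*} [CommRing R] [CommRing A] [Algebra R A]

theorem commute_of_lie_eq_zero {D₁ D₂ : Derivation R A A} (h : ⁅D₁, D₂⁆ = 0) :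
    Function.Commute D₁ D₂ := fun p => by
  simpa [commutator_apply, sub_eq_zero] using congr($h p)

variable (d : ι → Derivation R A A)

def jointFiltration : ℕ → Submodule R A
  | 0 => ⨅ i, LinearMap.ker (d i).toLinearMap
  | M + 1 => ⨅ i, (jointFiltration M).comap (d i).toLinearMap

variable {d} {M : ℕ} {p q : A}

theorem mem_jointFiltration_zero : p ∈ jointFiltration d 0 ↔ ∀ i, d i p = 0 := by
  simp [jointFiltration]

theorem mem_jointFiltration_succ :
    p ∈ jointFiltration d (M + 1) ↔ ∀ i, d i p ∈ jointFiltration d M := by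
  simp [jointFiltration]

theorem one_mem_jointFiltration : (1 : A) ∈ jointFiltration d 0 :=
  mem_jointFiltration_zero.2 fun i => (d i).map_one_eq_zero

theorem jointFiltration_mono : Monotone (jointFiltration d) := by
  refine monotone_nat_of_le_succ fun M p hp => ?_
  induction M generalizing p with
  | zero => exact mem_jointFiltration_succ.2 fun i => by simp [mem_jointFiltration_zero.1 hp i]
  | succ M ih => exact mem_jointFiltration_succ.2 fun i => ih _ (mem_jointFiltration_succ.1 hp i)

theorem mul_mem_jointFiltration {a b : ℕ} (hp : p ∈ jointFiltration d a)
    (hq : q ∈ jointFiltration d b) : p * q ∈ jointFiltration d (a + b) := by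
  suffices h : ∀ N a b (p q : A), a + b ≤ N → p ∈ jointFiltration d a →
      q ∈ jointFiltration d b → p * q ∈ jointFiltration d N from h _ a b p q le_rfl hp hq
  intro N
  induction N with
  | zero =>
    intro a b p q hab hp hq
    obtain ⟨rfl, rfl⟩ : a = 0 ∧ b = 0 := by omega
    refine mem_jointFiltration_zero.2 fun i => ?_
    simp [mem_jointFiltration_zero.1 hp i, mem_jointFiltration_zero.1 hq i]
  | succ N ih =>
    intro a b p q hab hp hq
    have leibniz_term : ∀ a b (p q : A), a + b ≤ N + 1 → p ∈ jointFiltration d a →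
        q ∈ jointFiltration d b → ∀ i, p * d i q ∈ jointFiltration d N := by
      intro a b p q hab hp hq i
      cases b with
      | zero => simp [mem_jointFiltration_zero.1 hq i]
      | succ b => exact ih a b _ _ (by omega) hp (mem_jointFiltration_succ.1 hq i)
    refine mem_jointFiltration_succ.2 fun i => ?_
    rw [leibniz, smul_eq_mul, smul_eq_mul]
    exact add_mem (leibniz_term a b p q hab hp hq i) (leibniz_term b a q p (by omega) hq hp i)

theorem pow_mem_jointFiltration {a : ℕ} (hp : p ∈ jointFiltration d a) (m : ℕ) :
    p ^ m ∈ jointFiltration d (a * m) := by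
  induction m with
  | zero => simpa using one_mem_jointFiltration (d := d)
  | succ m ih => rw [pow_succ, mul_add_one]; exact mul_mem_jointFiltration ih hp

theorem prod_pow_mem_jointFiltration {κ : Type*} [Fintype κ] {g : κ → A} {a : ℕ}
    (hg : ∀ k, g k ∈ jointFiltration d a) (β : κ → ℕ) :
    ∏ k, g k ^ β k ∈ jointFiltration d (a * ∑ k, β k) := by
  classical
  rw [Finset.mul_sum]
  induction (Finset.univ : Finset κ) using Finset.induction_on with
  | empty => simpa using one_mem_jointFiltration (d := d)
  | insert k s hk ih =>
    rw [Finset.prod_insert hk, Finset.sum_insert hk]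
    exact mul_mem_jointFiltration (pow_mem_jointFiltration (hg k) (β k)) ih

theorem mem_jointFiltration_of_iterate_eq_zero [Fintype ι] [DecidableEq ι]
    (hcomm : ∀ i j, ⁅d i, d j⁆ = 0) (m : ι → ℕ) (hp : ∀ i, (d i)^[m i] p = 0) :
    p ∈ jointFiltration d (∑ i, m i) := by
  induction h : ∑ i, m i generalizing m p with
  | zero =>
    refine mem_jointFiltration_zero.2 fun i => ?_
    have : m i = 0 := Finset.sum_eq_zero_iff.1 h i (Finset.mem_univ i)
    simpa [this] using congr(d i $(hp i))
  | succ N ih =>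
    refine mem_jointFiltration_succ.2 fun j => ?_
    obtain hj | hj := Nat.eq_zero_or_pos (m j)
    · have : p = 0 := by simpa [hj] using hp j
      simp [this]
    refine ih (Function.update m j (m j - 1)) (fun i => ?_) ?_
    · rcases eq_or_ne i j with rfl | hij
      · rw [Function.update_self, ← Function.iterate_succ_apply, Nat.succ_eq_add_one,
          Nat.sub_add_cancel hj, hp]
      · rw [Function.update_of_ne hij,
          ← ((commute_of_lie_eq_zero (hcomm j i)).iterate_right (m i)).eq, hp, map_zero]
    · rw [Finset.sum_update_of_mem (Finset.mem_univ j)]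
      rw [Finset.sum_eq_add_sum_sdiff_singleton_of_mem (Finset.mem_univ j)] at h
      omega

theorem exists_forall_mem_jointFiltration [Fintype ι] [DecidableEq ι]
    (hcomm : ∀ i j, ⁅d i, d j⁆ = 0) (hln : ∀ i p, ∃ m : ℕ, (d i)^[m] p = 0)
    {κ : Type*} [Finite κ] (g : κ → A) : ∃ N, ∀ k, g k ∈ jointFiltration d N := by
  have hg : ∀ k, ∀ᶠ N in Filter.atTop, g k ∈ jointFiltration d N := fun k => by
    choose m hm using fun i => hln i (g k)
    exact Filter.eventually_atTop.2 ⟨_, fun N hN =>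
      jointFiltration_mono hN (mem_jointFiltration_of_iterate_eq_zero hcomm m hm)⟩
  exact (Filter.eventually_all.2 hg).exists

end Filtration

section FiniteDimensional

variable {K A κ : Type*} [Field K] [CommRing A] [Algebra K A] [Nontrivial A] [Fintype κ]
  [DecidableEq κ] {e : κ → Derivation K A A} (hcomm : ∀ i j, ⁅e i, e j⁆ = 0)
  (hker : ∀ p, (∀ k, e k p = 0) → ∃ c, p = algebraMap K A c)
include hcomm hker

theorem exists_injective_jointFiltration (M : ℕ) :
    ∃ θ : jointFiltration e M →ₗ[K] (boundedMultiIndices κ M → K), Function.Injective θ := by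
  obtain ⟨φ, hφ⟩ := Module.Projective.exists_dual_ne_zero K (one_ne_zero : (1 : A) ≠ 0)
  obtain ⟨D, hD0, hD⟩ : ∃ D : (κ → ℕ) → Module.End K A,
      D 0 = 1 ∧ ∀ α k, D (α + Pi.single k 1) = D α * e k := by
    have hf : ∀ i j, Commute (e i : Module.End K A) (e j) := fun i j =>
      LinearMap.ext (commute_of_lie_eq_zero (hcomm i j))
    exact ⟨_, Module.End.multiPow_zero _ hf, fun α k => by
      rw [Module.End.multiPow_add, Module.End.multiPow_single]⟩
  have eq_zero : ∀ N, ∀ p ∈ jointFiltration e N,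
      (∀ α, ∑ k, α k ≤ N → φ (D α p) = 0) → p = 0 := by
    have of_ker : ∀ p, (∀ k, e k p = 0) → φ p = 0 → p = 0 := fun p hp hφp => by
      obtain ⟨c, rfl⟩ := hker p hp
      rw [Algebra.algebraMap_eq_smul_one, _root_.map_smul, smul_eq_mul, mul_eq_zero] at hφp
      simp [hφp.resolve_right hφ]
    have at_zero : ∀ p, (∀ α, ∑ k, α k ≤ 0 → φ (D α p) = 0) → φ p = 0 := fun p h => by
      simpa [hD0] using h 0 (by simp)
    intro N
    induction N with
    | zero => exact fun p hp h => of_ker p (mem_jointFiltration_zero.1 hp) (at_zero p h)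
    | succ N ih =>
      refine fun p hp h => of_ker p (fun k => ih _ (mem_jointFiltration_succ.1 hp k) fun α hα => ?_)
        (at_zero p fun α hα => h α (by omega))
      have := h (α + Pi.single k 1) (by simp [Finset.sum_add_distrib]; omega)
      rwa [hD] at this
  refine ⟨LinearMap.pi fun α => φ ∘ₗ D α ∘ₗ (jointFiltration e M).subtype, fun p q hpq => ?_⟩
  rw [← sub_eq_zero, ← Submodule.coe_eq_zero, Submodule.coe_sub]
  refine eq_zero M _ (sub_mem p.2 q.2) fun α hα => ?_
  simpa [sub_eq_zero] using
    congrFun hpq (⟨α, mem_boundedMultiIndices.2 hα⟩ : boundedMultiIndices κ M)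

theorem finiteDimensional_jointFiltration (M : ℕ) : FiniteDimensional K (jointFiltration e M) :=
  let ⟨_, hθ⟩ := exists_injective_jointFiltration hcomm hker M
  Module.Finite.of_injective _ hθ

theorem finrank_jointFiltration_le (M : ℕ) :
    Module.finrank K (jointFiltration e M) ≤ (boundedMultiIndices κ M).card := by
  obtain ⟨θ, hθ⟩ := exists_injective_jointFiltration hcomm hker M
  simpa using LinearMap.finrank_le_finrank_of_injective hθ

end FiniteDimensional

theorem exists_slice_of_exists_apply_ne_zero {K A ι : Type*} [Field K] [CommRing A]
    [Algebra K A] [DecidableEq ι] {d : ι → Derivation K A A} (hcomm : ∀ i j, ⁅d i, d j⁆ = 0)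
    (hln : ∀ i p, ∃ m : ℕ, (d i)^[m] p = 0)
    (hker : ∀ p, (∀ i, d i p = 0) → ∃ c, p = algebraMap K A c) {i : ι}
    (h : ∃ p, (∀ j ≠ i, d j p = 0) ∧ d i p ≠ 0) :
    ∃ s, ∀ j, d j s = if j = i then 1 else 0 := by
  have hcomm' := fun j j' => commute_of_lie_eq_zero (hcomm j j')
  obtain ⟨p, hp, hip⟩ := h
  obtain ⟨z, hz, hz2, hz1⟩ : ∃ z, (∀ j ≠ i, d j z = 0) ∧ d i (d i z) = 0 ∧ d i z ≠ 0 := by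
    by_contra! H
    obtain ⟨m, hm⟩ := hln i p
    refine hip (Function.apply_eq_zero_of_iterate_eq_zero (map_zero (d i)) (fun z hz j hj => ?_)
      H m hp hm)
    rw [(hcomm' j i) z, hz j hj, map_zero]
  obtain ⟨c, hc⟩ := hker (d i z) fun j => by
    rcases eq_or_ne j i with rfl | hj
    · exact hz2
    · rw [(hcomm' j i) z, hz j hj, map_zero]
  have hc0 : c ≠ 0 := by rintro rfl; exact hz1 (by simpa using hc)
  refine ⟨c⁻¹ • z, fun j => ?_⟩
  rw [(d j).map_smul]
  split_ifs with hj
  · rw [hj, hc, Algebra.smul_def, ← map_mul, inv_mul_cancel₀ hc0, map_one]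
  · rw [hz j hj, smul_zero]

end Derivation

namespace MvPolynomial

section General

variable {R A σ : Type*}

theorem linearIndependent_prod_X_pow [CommSemiring R] [Fintype σ] :
    LinearIndependent R fun β : σ → ℕ => ∏ i, (X i : MvPolynomial σ R) ^ β i := by
  convert (basisMonomials σ R).linearIndependent.comp _ Finsupp.equivFunOnFinite.symm.injective
    with β
  simp [coe_basisMonomials, monomial_eq, Finsupp.prod_fintype]

theorem eq_zero_of_pderiv_closed [CommRing R] [IsDomain R] [CharZero R]
    {P : MvPolynomial σ R → Prop} (hP : ∀ p, P p → ∀ i, P (pderiv i p))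
    (h0 : ∀ p, P p → constantCoeff p = 0) {p : MvPolynomial σ R} (hp : P p) : p = 0 := by
  suffices h : ∀ N (m : σ →₀ ℕ), m.degree = N → ∀ p, P p → coeff m p = 0 from
    ext _ _ fun m => (h _ m rfl p hp).trans (coeff_zero m).symm
  intro N
  induction N with
  | zero =>
    intro m hm p hp
    rw [(Finsupp.degree_eq_zero_iff m).1 hm, ← constantCoeff_eq]
    exact h0 p hp
  | succ N ih =>
    intro m hm p hp
    obtain ⟨i, hi⟩ : ∃ i, m i ≠ 0 := Finsupp.ne_iff.1 (show m ≠ 0 by rintro rfl; simp at hm)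
    set m' := m - Finsupp.single i 1
    have hm' : m' + Finsupp.single i 1 = m :=
      tsub_add_cancel_of_le (Finsupp.single_le_iff.2 (Nat.one_le_iff_ne_zero.2 hi))
    have hdeg : m'.degree = N := by
      rw [← hm', map_add, Finsupp.degree_single] at hm
      omega
    have h := coeff_pderiv (i := i) p m'
    rw [ih m' hdeg _ (hP p hp i), hm'] at h
    exact (mul_eq_zero.1 h.symm).resolve_right (Nat.cast_add_one_ne_zero _)

theorem derivation_aeval_eq_aeval_pderiv [CommSemiring R] [CommSemiring A] [Algebra R A]
    [DecidableEq σ] (D : Derivation R A A) (g : σ → A) (i : σ)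
    (hg : ∀ j, D (g j) = if i = j then 1 else 0) (p : MvPolynomial σ R) :
    D (aeval g p) = aeval g (pderiv i p) := by
  induction p using MvPolynomial.induction_on with
  | C a => simp
  | add p q hp hq => simp [hp, hq]
  | mul_X p j hp =>
    rw [map_mul, D.leibniz, hp, aeval_X, hg, (pderiv i).leibniz, pderiv_X, Pi.single_apply]
    rcases eq_or_ne i j with rfl | hij
    · simp [mul_comm]
    · simp [hij, hij.symm, mul_comm]

theorem aeval_injective_of_slices [CommRing R] [IsDomain R] [CharZero R] [DecidableEq σ]
    {τ : Type*} {d : σ → Derivation R (MvPolynomial τ R) (MvPolynomial τ R)}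
    {s : σ → MvPolynomial τ R} (hs : ∀ i j, d i (s j) = if i = j then 1 else 0)
    (hs0 : ∀ j, constantCoeff (s j) = 0) : Function.Injective (aeval (R := R) s) := by
  have hcc : constantCoeff.comp (aeval s : MvPolynomial σ R →ₐ[R] _).toRingHom = constantCoeff :=
    ringHom_ext (by simp) (by simp [hs0])
  refine (injective_iff_map_eq_zero _).2 fun p hp => eq_zero_of_pderiv_closed
    (P := fun p => aeval s p = 0) (fun p hp i => ?_) (fun p hp => ?_) hp
  · rw [← derivation_aeval_eq_aeval_pderiv (d i) s i (hs i), hp, map_zero]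
  · rw [← RingHom.congr_fun hcc p]
    exact (congrArg constantCoeff hp).trans (map_zero _)

end General

open Derivation Submodule

variable {K σ : Type*} [Field K] [Fintype σ] [DecidableEq σ]

theorem card_le_card_of_trivial_jointKernel {κ : Type*} [Fintype κ] [DecidableEq κ]
    {e : κ → Derivation K (MvPolynomial σ K) (MvPolynomial σ K)}
    (hcomm : ∀ i j, ⁅e i, e j⁆ = 0) (hln : ∀ i p, ∃ m : ℕ, (e i)^[m] p = 0)
    (hker : ∀ p, (∀ k, e k p = 0) → ∃ c, p = C c) :
    Fintype.card σ ≤ Fintype.card κ := by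
  by_contra! hlt
  obtain ⟨N, hN⟩ := exists_forall_mem_jointFiltration hcomm hln (X : σ → MvPolynomial σ K)
  -- The `(q + 1) ^ card σ` monomials of multidegree `≤ q` lie in `jointFiltration e L`, and `q` is
  -- chosen so that they outnumber the bound `(L + 1) ^ card κ` on its dimension.
  obtain ⟨q, hq⟩ := Nat.exists_mul_add_one_pow_lt (N * Fintype.card σ) (Fintype.card κ)
  set L := N * Fintype.card σ * q
  have := finiteDimensional_jointFiltration hcomm hker L
  let box := Fintype.piFinset fun _ : σ => Finset.range (q + 1)
  let v : box → MvPolynomial σ K := fun β => ∏ i, X i ^ β.1 i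
  have hv : LinearIndependent K v := linearIndependent_prod_X_pow.comp _ Subtype.val_injective
  have hvL : span K (Set.range v) ≤ jointFiltration e L := by
    refine span_le.2 (Set.range_subset_iff.2 fun β => ?_)
    refine jointFiltration_mono ?_ (prod_pow_mem_jointFiltration hN β.1)
    rw [show L = N * (Fintype.card σ * q) from mul_assoc _ _ _]
    refine Nat.mul_le_mul_left N ((Finset.sum_le_sum fun i _ => ?_).trans_eq
      (by rw [Finset.sum_const, Finset.card_univ, smul_eq_mul]))
    exact Nat.lt_succ_iff.1 (Finset.mem_range.1 (Fintype.mem_piFinset.1 β.2 i))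
  have := calc (q + 1) ^ Fintype.card σ = Fintype.card box := by simp [box]
    _ = Module.finrank K (span K (Set.range v)) := (finrank_span_eq_card hv).symm
    _ ≤ Module.finrank K (jointFiltration e L) := finrank_mono hvL
    _ ≤ (boundedMultiIndices κ L).card := finrank_jointFiltration_le hcomm hker L
    _ ≤ (L + 1) ^ Fintype.card κ := card_boundedMultiIndices_le
    _ < (q + 1) ^ (Fintype.card κ + 1) := hq
    _ ≤ (q + 1) ^ Fintype.card σ := Nat.pow_le_pow_right q.succ_pos hlt
  exact lt_irrefl _ this

variable {d : σ → Derivation K (MvPolynomial σ K) (MvPolynomial σ K)}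
  (hcomm : ∀ i j, ⁅d i, d j⁆ = 0) (hln : ∀ i p, ∃ m : ℕ, (d i)^[m] p = 0)
  (hker : ∀ p, (∀ i, d i p = 0) → ∃ c, p = C c)
include hcomm hln hker

theorem exists_slice (j : σ) :
    ∃ s, (∀ i, d i s = if i = j then 1 else 0) ∧ constantCoeff s = 0 := by
  have hj : ∃ p, (∀ i ≠ j, d i p = 0) ∧ d j p ≠ 0 := by
    by_contra! h
    have := card_le_card_of_trivial_jointKernel (e := fun i : {i // i ≠ j} => d i)
      (fun _ _ => hcomm _ _) (fun _ => hln _) fun p hp => hker p fun i => by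
        rcases eq_or_ne i j with rfl | hi
        exacts [h p fun i hi => hp ⟨i, hi⟩, hp ⟨i, hi⟩]
    simp only [ne_eq, Fintype.card_subtype_compl, Fintype.card_unique] at this
    have := Fintype.card_pos_iff.2 ⟨j⟩
    omega
  obtain ⟨s, hs⟩ := exists_slice_of_exists_apply_ne_zero hcomm hln hker hj
  refine ⟨s - C (constantCoeff s), fun i => ?_, by simp⟩
  rw [map_sub, hs, ← algebraMap_eq, Derivation.map_algebraMap, sub_zero]

theorem aeval_surjective_of_slices {s : σ → MvPolynomial σ K}
    (hs : ∀ i j, d i (s j) = if i = j then 1 else 0)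
    (hinj : Function.Injective (aeval (R := K) s)) : Function.Surjective (aeval (R := K) s) := by
  intro p
  choose m hm using fun i => hln i p
  set M := ∑ i, m i
  have hpM : p ∈ jointFiltration d M := mem_jointFiltration_of_iterate_eq_zero hcomm m hm
  have hs1 : ∀ j, s j ∈ jointFiltration d 1 := fun j => mem_jointFiltration_succ.2 fun i =>
    mem_jointFiltration_zero.2 fun k => by rw [hs]; split_ifs <;> simp
  have := finiteDimensional_jointFiltration hcomm hker M
  let v : boundedMultiIndices σ M → MvPolynomial σ K :=
    fun β => aeval s (∏ i, (X i : MvPolynomial σ K) ^ β.1 i)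
  have hv : LinearIndependent K v :=
    ((linearIndependent_prod_X_pow (R := K)).comp (Subtype.val : boundedMultiIndices σ M → σ → ℕ)
      Subtype.val_injective).map' (aeval s).toLinearMap (LinearMap.ker_eq_bot.2 hinj)
  have hvM : span K (Set.range v) ≤ jointFiltration d M := by
    refine span_le.2 (Set.range_subset_iff.2 fun β => ?_)
    simp only [v, map_prod, map_pow, aeval_X]
    refine jointFiltration_mono ?_ (prod_pow_mem_jointFiltration hs1 β.1)
    rw [one_mul]
    exact mem_boundedMultiIndices.1 β.2
  have hspan : span K (Set.range v) = jointFiltration d M := by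
    refine eq_of_le_of_finrank_le hvM ?_
    rw [finrank_span_eq_card hv, Fintype.card_coe]
    exact finrank_jointFiltration_le hcomm hker M
  have hrange : span K (Set.range v) ≤ LinearMap.range (aeval s).toLinearMap :=
    span_le.2 (Set.range_subset_iff.2 fun β => ⟨_, rfl⟩)
  exact hrange (hspan ▸ hpM)

end MvPolynomial

/-- If ∂_1',...,∂_n' are pairwise commuting locally nilpotent derivations of P_n with
∩ ker(∂_i') = K, then there are polynomials x_i' with ∂_i'(x_j') = δ_{ij}, the algebra
endomorphism x_i ↦ x_i' is an automorphism σ, and ∂_i' = σ ∂_i σ⁻¹. -/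
theorem commuting_locally_nilpotent_derivations_conjugate_to_partials
    (n : ℕ) (K : Type*) [Field K] [CharZero K]
    (d : Fin n → Derivation K (MvPolynomial (Fin n) K) (MvPolynomial (Fin n) K))
    (hcomm : ∀ i j : Fin n, ⁅d i, d j⁆ = 0)
    (hln : ∀ (i : Fin n) (p : MvPolynomial (Fin n) K), ∃ m : ℕ, (⇑(d i))^[m] p = 0)
    (hker : ∀ p : MvPolynomial (Fin n) K, (∀ i : Fin n, d i p = 0) ↔ ∃ c : K, p = C c) :
    ∃ x' : Fin n → MvPolynomial (Fin n) K,
      (∀ i j : Fin n, d i (x' j) = if i = j then 1 else 0) ∧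
      ∃ σ : MvPolynomial (Fin n) K ≃ₐ[K] MvPolynomial (Fin n) K,
        (∀ i : Fin n, σ (X i) = x' i) ∧
        (∀ (i : Fin n) (p : MvPolynomial (Fin n) K), d i p = σ (pderiv i (σ.symm p))) := by
  have hker' := fun p => (hker p).1
  choose s hs hs0 using exists_slice hcomm hln hker'
  have hs' : ∀ i j, d i (s j) = if i = j then 1 else 0 := fun i j => hs j i
  have hinj := aeval_injective_of_slices hs' hs0
  let σ := AlgEquiv.ofBijective (aeval s)
    ⟨hinj, aeval_surjective_of_slices hcomm hln hker' hs' hinj⟩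
  refine ⟨s, hs', σ, aeval_X s, fun i p => ?_⟩
  calc d i p = d i (σ (σ.symm p)) := by rw [σ.apply_symm_apply]
    _ = σ (pderiv i (σ.symm p)) := derivation_aeval_eq_aeval_pderiv _ _ _ (hs' i) _
end
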